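/- arXiv:1801.00846 — 6 statements merged into one kernel-verified Lean document; each statement's English description precedes it below -/
import Mathlib

section
/- Let α ∈ (0,1), L_b > 0, let (Ω, μ) be a measure space, let b : ℝ → ℝ be monotone nondecreasing with |b(x) − b(y)| ≤ L_b·|x − y|^α for all x, y ∈ ℝ, and let f, g : Ω → ℝ be measurable with x ↦ (b(f(x)) − b(g(x)))·(f(x) − g(x)) integrable. Then ∫_Ω (b(f(x)) − b(g(x)))·(f(x) − g(x)) dμ ≥ L_b^{−1/α} · ∫_Ω |b(f(x)) − b(g(x))|^{(1+α)/α} dμ. -/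
/-!
Pointwise, Hölder continuity gives `|b u - b v| ≤ L_b |u - v|^α`, i.e.
`L_b^{-1/α} |b u - b v|^{1/α} ≤ |u - v|`; multiplying by `|b u - b v|` and using monotonicity,
which makes `(b u - b v)(u - v) = |b u - b v| |u - v|`, gives the inequality for the integrands.
It then integrates, since the left-hand integrand is nonnegative and the right-hand one integrable.
-/

open MeasureTheory Real

lemma rpow_neg_inv_mul_rpow_one_add_div_le {α L A D : ℝ} (hα : 0 < α) (hL : 0 < L)
    (hA : 0 ≤ A) (hD : 0 ≤ D) (h : A ≤ L * D ^ α) :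
    L ^ (-(1 / α)) * A ^ ((1 + α) / α) ≤ A * D := by
  have hroot : (A / L) ^ α⁻¹ ≤ D :=
    (rpow_inv_le_iff_of_pos (by positivity) hD hα).2 (by rwa [div_le_iff₀' hL])
  calc L ^ (-(1 / α)) * A ^ ((1 + α) / α) = A * (A / L) ^ α⁻¹ := by
        rw [show (1 + α) / α = 1 + α⁻¹ by field_simp; ring, rpow_one_add' hA (by positivity),
          div_rpow hA hL.le, rpow_neg hL.le, one_div]
        ring
    _ ≤ A * D := mul_le_mul_of_nonneg_left hroot hA

lemma Monotone.rpow_neg_inv_mul_abs_sub_rpow_le_mul_sub {α L : ℝ} {b : ℝ → ℝ}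
    (hmono : Monotone b) (hα : 0 < α) (hL : 0 < L)
    (hHolder : ∀ x y : ℝ, |b x - b y| ≤ L * |x - y| ^ α) (u v : ℝ) :
    L ^ (-(1 / α)) * |b u - b v| ^ ((1 + α) / α) ≤ (b u - b v) * (u - v) := by
  wlog huv : v ≤ u generalizing u v
  · rw [abs_sub_comm, show (b u - b v) * (u - v) = (b v - b u) * (v - u) by ring]
    exact this v u (le_of_not_ge huv)
  have hbuv : 0 ≤ b u - b v := sub_nonneg.2 (hmono huv)
  have hHolder_uv := hHolder u v
  rw [abs_of_nonneg hbuv, abs_of_nonneg (sub_nonneg.2 huv)] at hHolder_uv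
  rw [abs_of_nonneg hbuv]
  exact rpow_neg_inv_mul_rpow_one_add_div_le hα hL hbuv (sub_nonneg.2 huv) hHolder_uv

theorem stmt_1_general {Ω : Type*} [MeasurableSpace Ω] (μ : Measure Ω)
    (α Lb : ℝ) (hα : α ∈ Set.Ioo (0:ℝ) 1) (hLb : 0 < Lb)
    (b : ℝ → ℝ) (hmono : Monotone b)
    (hHolder : ∀ x y : ℝ, |b x - b y| ≤ Lb * |x - y| ^ α)
    (f g : Ω → ℝ)
    (hint : Integrable (fun x => (b (f x) - b (g x)) * (f x - g x)) μ) :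
    ∫ x, (b (f x) - b (g x)) * (f x - g x) ∂μ ≥
      Lb ^ (-(1/α)) * ∫ x, |b (f x) - b (g x)| ^ ((1 + α) / α) ∂μ := by
  have hpointwise x := hmono.rpow_neg_inv_mul_abs_sub_rpow_le_mul_sub hα.1 hLb hHolder (f x) (g x)
  rw [ge_iff_le, ← integral_const_mul]
  exact integral_mono_of_nonneg (ae_of_all _ fun x => by positivity) hint (ae_of_all _ hpointwise)

theorem stmt_1 {Ω : Type*} [MeasurableSpace Ω] (μ : Measure Ω)
    (α Lb : ℝ) (hα : α ∈ Set.Ioo (0:ℝ) 1) (hLb : 0 < Lb)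
    (b : ℝ → ℝ) (hmono : Monotone b)
    (hHolder : ∀ x y : ℝ, |b x - b y| ≤ Lb * |x - y| ^ α)
    (f g : Ω → ℝ) (hf : Measurable f) (hg : Measurable g)
    (hint : Integrable (fun x => (b (f x) - b (g x)) * (f x - g x)) μ) :
    ∫ x, (b (f x) - b (g x)) * (f x - g x) ∂μ ≥
      Lb ^ (-(1/α)) * ∫ x, |b (f x) - b (g x)| ^ ((1 + α) / α) ∂μ :=
  stmt_1_general μ α Lb hα hLb b hmono hHolder f g hint
end

section
/- Let α ∈ (0,1), L_b > 0, let (Ω, μ) be a measure space, let b : ℝ → ℝ satisfy |b(x) − b(y)| ≤ L_b·|x − y|^α for all x, y ∈ ℝ, and let f, g, h : Ω → ℝ be measurable such that x ↦ (b(f(x)) − b(g(x)))·h(x) is integrable, x ↦ |b(f(x)) − b(g(x))|^{(1+α)/α} is integrable, and x ↦ |h(x)|^{1+α} is integrable. Then |∫_Ω (b(f(x)) − b(g(x)))·h(x) dμ| ≤ (1/(2·L_b^{1/α}))·∫_Ω |b(f(x)) − b(g(x))|^{(1+α)/α} dμ + (2α)^α·L_b·(1+α)^{−(1+α)}·∫_Ω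 |h(x)|^{1+α} dμ. -/
/-!
With `u = b ∘ f - b ∘ g`, the exponents `(1 + α) / α` and `1 + α` are Hölder conjugate, so
Young's inequality, rescaled so that the coefficient of `|u| ^ ((1 + α) / α)` is
`1 / (2 Lb ^ (1 / α))`, bounds `|u h|` pointwise by the two integrands on the right-hand side;
integrating gives the claim.
-/

open MeasureTheory

namespace Real

lemma holderConjugate_one_add_div_self {α : ℝ} (hα : 0 < α) :
    ((1 + α) / α).HolderConjugate (1 + α) := by
  rw [holderConjugate_iff]
  constructor
  · rw [lt_div_iff₀ hα]
    linarith
  · field_simp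
    ring

/-- Young's inequality with the first term scaled by `t`, i.e. applied to `t ^ (1 / p) * a`
and `b / t ^ (1 / p)`. -/
lemma young_inequality_of_nonneg_of_scale {a b p q t : ℝ} (ha : 0 ≤ a) (hb : 0 ≤ b)
    (hpq : p.HolderConjugate q) (ht : 0 < t) :
    a * b ≤ t / p * a ^ p + t ^ (-(q / p)) / q * b ^ q := by
  set ε := t ^ (1 / p)
  have hε : 0 < ε := rpow_pos_of_pos ht _
  have hεp : ε ^ p = t := by
    rw [← rpow_mul ht.le, one_div_mul_cancel hpq.ne_zero, rpow_one]
  have hεq : ε ^ q = t ^ (q / p) := by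
    rw [← rpow_mul ht.le, one_div_mul_eq_div]
  calc a * b = (ε * a) * (b / ε) := by field_simp
    _ ≤ (ε * a) ^ p / p + (b / ε) ^ q / q :=
        young_inequality_of_nonneg (by positivity) (by positivity) hpq
    _ = t / p * a ^ p + t ^ (-(q / p)) / q * b ^ q := by
        rw [mul_rpow hε.le ha, div_rpow hb hε.le, hεp, hεq, rpow_neg ht.le]
        ring

lemma abs_mul_le_holder_young {α L : ℝ} (hα : 0 < α) (hL : 0 < L) (u v : ℝ) :
    |u * v| ≤ 1 / (2 * L ^ (1 / α)) * |u| ^ ((1 + α) / α) +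
      (2 * α) ^ α * L * (1 + α) ^ (-(1 + α)) * |v| ^ (1 + α) := by
  have hLα : 0 < L ^ (1 / α) := rpow_pos_of_pos hL _
  have hscale : 0 < (1 + α) / (2 * α * L ^ (1 / α)) := by positivity
  convert young_inequality_of_nonneg_of_scale (abs_nonneg u) (abs_nonneg v)
    (holderConjugate_one_add_div_self hα) hscale using 2
  · exact abs_mul u v
  · field_simp
  · have hexp : -((1 + α) / ((1 + α) / α)) = -α := by field_simp
    rw [hexp, rpow_neg hscale.le, div_rpow (by positivity) (by positivity),
      mul_rpow (by positivity) hLα.le, ← rpow_mul hL.le, one_div_mul_cancel hα.ne', rpow_one,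
      rpow_neg (by positivity), rpow_add (by positivity), rpow_one]
    field_simp

end Real

lemma abs_integral_le_of_abs_le_add {Ω : Type*} [MeasurableSpace Ω] {μ : Measure Ω}
    {F G₁ G₂ : Ω → ℝ} {c₁ c₂ : ℝ} (hG₁ : Integrable G₁ μ) (hG₂ : Integrable G₂ μ)
    (hF : ∀ x, |F x| ≤ c₁ * G₁ x + c₂ * G₂ x) :
    |∫ x, F x ∂μ| ≤ c₁ * ∫ x, G₁ x ∂μ + c₂ * ∫ x, G₂ x ∂μ := by
  rw [← integral_const_mul, ← integral_const_mul,
    ← integral_add (hG₁.const_mul c₁) (hG₂.const_mul c₂), ← Real.norm_eq_abs]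
  exact norm_integral_le_of_norm_le ((hG₁.const_mul c₁).add (hG₂.const_mul c₂)) (ae_of_all _ hF)

theorem stmt_3_general {Ω : Type*} [MeasurableSpace Ω] (μ : Measure Ω)
    (α Lb : ℝ) (hα : α ∈ Set.Ioo (0:ℝ) 1) (hLb : 0 < Lb)
    (b : ℝ → ℝ)
    (f g h : Ω → ℝ)
    (hint2 : Integrable (fun x => |b (f x) - b (g x)| ^ ((1 + α) / α)) μ)
    (hint3 : Integrable (fun x => |h x| ^ (1 + α)) μ) :
    |∫ x, (b (f x) - b (g x)) * h x ∂μ| ≤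
      (1 / (2 * Lb ^ (1/α))) * ∫ x, |b (f x) - b (g x)| ^ ((1 + α) / α) ∂μ +
        (2 * α) ^ α * Lb * (1 + α) ^ (-(1 + α)) * ∫ x, |h x| ^ (1 + α) ∂μ :=
  abs_integral_le_of_abs_le_add hint2 hint3 fun _ =>
    Real.abs_mul_le_holder_young hα.1 hLb _ _

theorem stmt_3 {Ω : Type*} [MeasurableSpace Ω] (μ : Measure Ω)
    (α Lb : ℝ) (hα : α ∈ Set.Ioo (0:ℝ) 1) (hLb : 0 < Lb)
    (b : ℝ → ℝ) (hHolder : ∀ x y : ℝ, |b x - b y| ≤ Lb * |x - y| ^ α)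
    (f g h : Ω → ℝ) (hf : Measurable f) (hg : Measurable g) (hh : Measurable h)
    (hint1 : Integrable (fun x => (b (f x) - b (g x)) * h x) μ)
    (hint2 : Integrable (fun x => |b (f x) - b (g x)| ^ ((1 + α) / α)) μ)
    (hint3 : Integrable (fun x => |h x| ^ (1 + α)) μ) :
    |∫ x, (b (f x) - b (g x)) * h x ∂μ| ≤
      (1 / (2 * Lb ^ (1/α))) * ∫ x, |b (f x) - b (g x)| ^ ((1 + α) / α) ∂μ +
        (2 * α) ^ α * Lb * (1 + α) ^ (-(1 + α)) * ∫ x, |h x| ^ (1 + α) ∂μ :=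
  stmt_3_general μ α Lb hα hLb b f g h hint2 hint3
end

section
/- Let α ∈ (0,1) and ε > 0, and define b(u) = (max{u,0})^α and the linear regularization b_ε : ℝ → ℝ by b_ε(u) = ε^{α−1}·u for u ∈ (0,ε) and b_ε(u) = b(u) otherwise. Then for all x ∈ ℝ one has 0 ≤ b(x) − b_ε(x) ≤ (1−α)·α^{α/(1−α)}·ε^α. -/
/-!
On `(0, ε)` the gap `b - b_ε` is `x ^ α - ε ^ (α - 1) * x`, which is nonnegative because the chord
of the concave function `x ^ α` lies below it. For the upper bound, the line of slope `ε ^ (α - 1)`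
is tangent to `x ^ α` at `c = α ^ (1 / (1 - α)) * ε`, and the tangent dominates `x ^ α`; its
intercept `(1 - α) * c ^ α` is the constant of the theorem.
-/

namespace Real

theorem rpow_le_tangent_line {p c x : ℝ} (hp0 : 0 ≤ p) (hp1 : p ≤ 1) (hc : 0 < c) (hx : 0 ≤ x) :
    x ^ p ≤ p * c ^ (p - 1) * x + (1 - p) * c ^ p := by
  have bernoulli : (x / c) ^ p ≤ 1 + p * (x / c - 1) := by
    simpa using rpow_one_add_le_one_add_mul_self (s := x / c - 1)
      (by linarith [div_nonneg hx hc.le]) hp0 hp1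
  have hcp : 0 < c ^ p := rpow_pos_of_pos hc p
  calc x ^ p = c ^ p * (x / c) ^ p := by
        rw [div_rpow hx hc.le, mul_div_cancel₀ _ hcp.ne']
    _ ≤ c ^ p * (1 + p * (x / c - 1)) := mul_le_mul_of_nonneg_left bernoulli hcp.le
    _ = p * c ^ (p - 1) * x + (1 - p) * c ^ p := by
        rw [rpow_sub_one hc.ne']
        field_simp
        ring

theorem rpow_le_mul_add_of_lt_one {α ε x : ℝ} (hα0 : 0 < α) (hα1 : α < 1) (hε : 0 < ε)
    (hx : 0 ≤ x) :
    x ^ α ≤ ε ^ (α - 1) * x + (1 - α) * α ^ (α / (1 - α)) * ε ^ α := by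
  have h1α : 1 - α ≠ 0 := by linarith
  set c := α ^ (1 / (1 - α)) * ε with hc_def
  have hc : 0 < c := by positivity
  have slope : α * c ^ (α - 1) = ε ^ (α - 1) := by
    rw [hc_def, mul_rpow (by positivity) hε.le, ← rpow_mul hα0.le,
      show 1 / (1 - α) * (α - 1) = -1 by field_simp; ring, rpow_neg_one]
    field_simp
  have intercept : c ^ α = α ^ (α / (1 - α)) * ε ^ α := by
    rw [hc_def, mul_rpow (by positivity) hε.le, ← rpow_mul hα0.le, one_div_mul_eq_div]
  calc x ^ α ≤ α * c ^ (α - 1) * x + (1 - α) * c ^ α :=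
        rpow_le_tangent_line hα0.le hα1.le hc hx
    _ = ε ^ (α - 1) * x + (1 - α) * α ^ (α / (1 - α)) * ε ^ α := by
        rw [slope, intercept, mul_assoc]

theorem rpow_sub_one_mul_le_rpow {p ε x : ℝ} (hp : p ≤ 1) (hx : 0 < x) (hxε : x ≤ ε) :
    ε ^ (p - 1) * x ≤ x ^ p :=
  calc ε ^ (p - 1) * x ≤ x ^ (p - 1) * x :=
        mul_le_mul_of_nonneg_right (rpow_le_rpow_of_nonpos hx hxε (by linarith)) hx.le
    _ = x ^ p := by rw [rpow_sub_one hx.ne', div_mul_cancel₀ _ hx.ne']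

end Real

theorem stmt_13 (α ε : ℝ) (hα : α ∈ Set.Ioo (0:ℝ) 1) (hε : 0 < ε)
    (b bε : ℝ → ℝ)
    (hb : ∀ u : ℝ, b u = (max u 0) ^ α)
    (hbε : ∀ u : ℝ, bε u = if u ∈ Set.Ioo 0 ε then ε ^ (α - 1) * u else b u) :
    ∀ x : ℝ, 0 ≤ b x - bε x ∧ b x - bε x ≤ (1 - α) * α ^ (α / (1 - α)) * ε ^ α := by
  obtain ⟨hα0, hα1⟩ := hα
  intro x
  rw [hbε]
  split_ifs with hx
  · obtain ⟨hx0, hxε⟩ := hx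
    rw [hb, max_eq_left hx0.le]
    constructor
    · linarith [Real.rpow_sub_one_mul_le_rpow hα1.le hx0 hxε.le]
    · linarith [Real.rpow_le_mul_add_of_lt_one hα0 hα1 hε hx0.le]
  · have : 0 < 1 - α := by linarith
    simp only [sub_self, le_refl, true_and]
    positivity
end

section
/- Let α ∈ (0,1) and ε > 0, and define b(u) = (max{u,0})^α and the quadratic regularization b_ε : ℝ → ℝ by b_ε(u) = (α−1)·ε^{α−2}·u² + (2−α)·ε^{α−1}·u for u ∈ (0,ε) and b_ε(u) = b(u) otherwise. Then b_ε is monotone nondecreasing and continuous on ℝ. -/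
/-!
On `[0, ε]` the regularization is the quadratic `Q` with `Q 0 = 0`, `Q ε = ε ^ α`, so `b_ε` is
continuous: the pieces match at `0` and at `ε`. Monotonicity on `[0, ε]` comes from the
factorization `Q v - Q u = ε ^ (α - 2) (v - u) ((α - 1)(u + v) + (2 - α) ε)`, whose last factor is
affine in `u + v ∈ [0, 2ε]` with endpoint values `(2 - α) ε` and `α ε`, both nonnegative.
-/

open Set Real

noncomputable section

variable {α ε u : ℝ}

def quadReg (α ε u : ℝ) : ℝ :=
  (α - 1) * ε ^ (α - 2) * u ^ 2 + (2 - α) * ε ^ (α - 1) * u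

def regPow (α ε u : ℝ) : ℝ :=
  if u ∈ Ioo 0 ε then quadReg α ε u else max u 0 ^ α

theorem rpow_sub_one_eq_rpow_sub_two_mul (hε : 0 < ε) : ε ^ (α - 1) = ε ^ (α - 2) * ε := by
  rw [← rpow_add_one hε.ne']; ring_nf

theorem quadReg_zero : quadReg α ε 0 = 0 := by
  simp [quadReg]

theorem quadReg_self (hε : 0 < ε) : quadReg α ε ε = ε ^ α := by
  have h_pow : ε ^ α = ε ^ (α - 2) * ε ^ 2 := by
    rw [← rpow_natCast, ← rpow_add hε]; norm_num
  rw [quadReg, rpow_sub_one_eq_rpow_sub_two_mul hε, h_pow]; ring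

theorem quadReg_sub_quadReg (hε : 0 < ε) (u v : ℝ) :
    quadReg α ε v - quadReg α ε u =
      ε ^ (α - 2) * (v - u) * ((α - 1) * (u + v) + (2 - α) * ε) := by
  rw [quadReg, quadReg, rpow_sub_one_eq_rpow_sub_two_mul hε]; ring

theorem monotoneOn_quadReg (hα0 : 0 ≤ α) (hα2 : α ≤ 2) (hε : 0 < ε) :
    MonotoneOn (quadReg α ε) (Icc 0 ε) := by
  intro u hu v hv huv
  have h_factor : 0 ≤ (α - 1) * (u + v) + (2 - α) * ε := by
    linarith [mul_nonneg (sub_nonneg.2 hα2) (by linarith [hu.2, hv.2] : 0 ≤ 2 * ε - (u + v)),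
      mul_nonneg hα0 (by linarith [hu.1, hv.1] : 0 ≤ u + v)]
  have h_diff : 0 ≤ ε ^ (α - 2) * (v - u) * ((α - 1) * (u + v) + (2 - α) * ε) :=
    mul_nonneg (mul_nonneg (rpow_pos_of_pos hε _).le (sub_nonneg.2 huv)) h_factor
  linarith [quadReg_sub_quadReg (α := α) hε u v]

theorem continuous_quadReg : Continuous (quadReg α ε) := by
  unfold quadReg; fun_prop

theorem regPow_of_nonpos (hα : α ≠ 0) (hu : u ≤ 0) : regPow α ε u = 0 := by
  rw [regPow, if_neg fun h => hu.not_gt h.1, max_eq_right hu, zero_rpow hα]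

theorem regPow_of_le (hε : 0 ≤ ε) (hu : ε ≤ u) : regPow α ε u = u ^ α := by
  rw [regPow, if_neg fun h => hu.not_gt h.2, max_eq_left (hε.trans hu)]

theorem regPow_of_mem_Icc (hα : α ≠ 0) (hε : 0 < ε) (hu : u ∈ Icc 0 ε) :
    regPow α ε u = quadReg α ε u := by
  rcases hu.1.eq_or_lt with rfl | hu0
  · rw [regPow_of_nonpos hα le_rfl, quadReg_zero]
  rcases hu.2.eq_or_lt with rfl | huε
  · rw [regPow_of_le hε.le le_rfl, quadReg_self hε]
  · exact if_pos ⟨hu0, huε⟩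

theorem monotone_regPow (hα0 : 0 < α) (hα2 : α ≤ 2) (hε : 0 < ε) : Monotone (regPow α ε) := by
  have h_neg : MonotoneOn (regPow α ε) (Iic 0) :=
    monotoneOn_const.congr fun u hu => (regPow_of_nonpos hα0.ne' hu).symm
  have h_quad : MonotoneOn (regPow α ε) (Icc 0 ε) :=
    (monotoneOn_quadReg hα0.le hα2 hε).congr fun u hu => (regPow_of_mem_Icc hα0.ne' hε hu).symm
  have h_pow : MonotoneOn (regPow α ε) (Ici ε) :=
    ((monotoneOn_rpow_Ici_of_exponent_nonneg hα0.le).mono (Ici_subset_Ici.2 hε.le)).congr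
      fun u hu => (regPow_of_le hε.le hu).symm
  refine h_neg.Iic_union_Ici ?_
  rw [← Icc_union_Ici_eq_Ici hε.le]
  exact h_quad.union_right h_pow (isGreatest_Icc hε.le) isLeast_Ici

theorem continuous_regPow (hα : 0 < α) (hε : 0 < ε) : Continuous (regPow α ε) := by
  refine Continuous.if (fun u hu => ?_) continuous_quadReg
    ((continuous_id.max continuous_const).rpow_const fun _ => Or.inr hα.le)
  rw [show {u : ℝ | u ∈ Ioo 0 ε} = Ioo 0 ε from rfl, frontier_Ioo hε] at hu
  rcases hu with rfl | rfl
  · rw [quadReg_zero, max_self, zero_rpow hα.ne']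
  · rw [quadReg_self hε, max_eq_left hε.le]

end

theorem stmt_14 (α ε : ℝ) (hα : α ∈ Set.Ioo (0:ℝ) 1) (hε : 0 < ε)
    (b bε : ℝ → ℝ)
    (hb : ∀ u : ℝ, b u = (max u 0) ^ α)
    (hbε : ∀ u : ℝ, bε u =
      if u ∈ Set.Ioo 0 ε then (α - 1) * ε ^ (α - 2) * u ^ 2 + (2 - α) * ε ^ (α - 1) * u
      else b u) :
    Monotone bε ∧ Continuous bε := by
  have hbε_eq : bε = regPow α ε :=
    funext fun u => by rw [hbε, hb, regPow, quadReg]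
  rw [hbε_eq]
  exact ⟨monotone_regPow hα.1 (by linarith [hα.2]) hε,
    continuous_regPow hα.1 hε⟩
end

section
/- Let α ∈ (0,1) and ε > 0, and define b(u) = (max{u,0})^α and the quadratic regularization b_ε : ℝ → ℝ by b_ε(u) = (α−1)·ε^{α−2}·u² + (2−α)·ε^{α−1}·u for u ∈ (0,ε) and b_ε(u) = b(u) otherwise. Then b_ε is Lipschitz continuous with constant (2−α)·ε^{α−1}, i.e. |b_ε(x) − b_ε(y)| ≤ (2−α)·ε^{α−1}·|x − y| for all x, y ∈ ℝ. -/
/-!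
On `(-∞, 0]` the function `b_ε` vanishes, on `[0, ε]` it is a concave quadratic whose slope
decreases from `(2 - α) ε^(α-1)` to `α ε^(α-1)`, and on `[ε, ∞)` it is `u ^ α`, whose slope is at
most `α ε^(α-1)`. The mean value theorem makes each piece `(2 - α) ε^(α-1)`-Lipschitz, and
Lipschitz bounds on two intervals sharing an endpoint glue by the triangle inequality through
that endpoint.
-/

open Set NNReal

theorem LipschitzOnWith.congr {α β : Type*} [PseudoEMetricSpace α] [PseudoEMetricSpace β]
    {K : ℝ≥0} {f g : α → β} {s : Set α} (hf : LipschitzOnWith K f s) (h : EqOn f g s) :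
    LipschitzOnWith K g s := fun x hx y hy => by
  rw [← h hx, ← h hy]
  exact hf hx hy

theorem LipschitzOnWith.union_of_subset_Iic_of_subset_Ici {E : Type*} [PseudoMetricSpace E]
    {f : ℝ → E} {K : ℝ≥0} {s t : Set ℝ} {a : ℝ} (hs : LipschitzOnWith K f s)
    (ht : LipschitzOnWith K f t) (has : a ∈ s) (hat : a ∈ t) (hsa : s ⊆ Iic a) (hta : t ⊆ Ici a) :
    LipschitzOnWith K f (s ∪ t) := by
  have across : ∀ x ∈ s, ∀ y ∈ t, dist (f x) (f y) ≤ K * dist x y := fun x hx y hy => by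
    have hxa : x ≤ a := hsa hx
    have hay : a ≤ y := hta hy
    calc dist (f x) (f y) ≤ dist (f x) (f a) + dist (f a) (f y) := dist_triangle _ _ _
      _ ≤ K * dist x a + K * dist a y :=
        add_le_add (hs.dist_le_mul x hx a has) (ht.dist_le_mul a hat y hy)
      _ = K * dist x y := by
        rw [Real.dist_eq, Real.dist_eq, Real.dist_eq, abs_of_nonpos (by linarith),
          abs_of_nonpos (by linarith), abs_of_nonpos (by linarith)]
        ring
  refine LipschitzOnWith.of_dist_le_mul fun x hx y hy => ?_
  rcases hx with hx | hx <;> rcases hy with hy | hy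
  · exact hs.dist_le_mul x hx y hy
  · exact across x hx y hy
  · rw [dist_comm, dist_comm x]
    exact across y hy x hx
  · exact ht.dist_le_mul x hx y hy

theorem lipschitzOnWith_rpow_Ici {α ε : ℝ} (hα₀ : 0 ≤ α) (hα₁ : α ≤ 1) (hε : 0 < ε) :
    LipschitzOnWith (α * ε ^ (α - 1)).toNNReal (fun u : ℝ => u ^ α) (Ici ε) := by
  refine (convex_Ici ε).lipschitzOnWith_of_nnnorm_hasDerivWithin_le
    (fun u hu => (Real.hasDerivAt_rpow_const (Or.inl (hε.trans_le hu).ne')).hasDerivWithinAt)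
    fun u (hu : ε ≤ u) => ?_
  have hu₀ : 0 < u := hε.trans_le hu
  have hderiv₀ : 0 ≤ α * u ^ (α - 1) := mul_nonneg hα₀ (by positivity)
  rw [Real.le_toNNReal_iff_coe_le (mul_nonneg hα₀ (by positivity)), coe_nnnorm, Real.norm_eq_abs,
    abs_of_nonneg hderiv₀]
  exact mul_le_mul_of_nonneg_left (Real.rpow_le_rpow_of_nonpos hε hu (by linarith)) hα₀

theorem lipschitzOnWith_quadratic_Icc {α ε : ℝ} (hα : α ≤ 1) (hε : 0 < ε) :
    LipschitzOnWith ((2 - α) * ε ^ (α - 1)).toNNReal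
      (fun u : ℝ => (α - 1) * ε ^ (α - 2) * u ^ 2 + (2 - α) * ε ^ (α - 1) * u) (Icc 0 ε) := by
  have hB : 0 < ε ^ (α - 2) := Real.rpow_pos_of_pos hε _
  have hBε : ε ^ (α - 2) * ε = ε ^ (α - 1) := by
    rw [← Real.rpow_add_one hε.ne']; ring_nf
  refine (convex_Icc 0 ε).lipschitzOnWith_of_nnnorm_hasDerivWithin_le
    (f' := fun u => (2 - α) * ε ^ (α - 1) - 2 * ((1 - α) * ε ^ (α - 2) * u))
    (fun u _ => HasDerivAt.hasDerivWithinAt <|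
      (((hasDerivAt_pow 2 u).const_mul _).add ((hasDerivAt_id u).const_mul _)).congr_deriv
        (by simp only [Nat.cast_ofNat, Nat.add_one_sub_one, pow_one, mul_one]; ring))
    fun u ⟨hu₀, huε⟩ => ?_
  have hcu₀ : 0 ≤ (1 - α) * ε ^ (α - 2) * u := by
    have : 0 ≤ 1 - α := by linarith
    positivity
  have hcuε : (1 - α) * ε ^ (α - 2) * u ≤ (1 - α) * ε ^ (α - 1) := by
    rw [← hBε, ← mul_assoc]
    exact mul_le_mul_of_nonneg_left huε (mul_nonneg (by linarith) hB.le)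
  rw [Real.le_toNNReal_iff_coe_le (by nlinarith), coe_nnnorm, Real.norm_eq_abs, abs_le]
  constructor <;> nlinarith

noncomputable def quadRegPow (α ε u : ℝ) : ℝ :=
  if u ∈ Ioo 0 ε then (α - 1) * ε ^ (α - 2) * u ^ 2 + (2 - α) * ε ^ (α - 1) * u
  else max u 0 ^ α

section quadRegPow

variable {α ε : ℝ}

theorem quadRegPow_of_nonpos (hα : α ≠ 0) {u : ℝ} (hu : u ≤ 0) : quadRegPow α ε u = 0 := by
  rw [quadRegPow, if_neg fun h => hu.not_gt h.1, max_eq_right hu, Real.zero_rpow hα]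

theorem quadRegPow_of_le (hε : 0 ≤ ε) {u : ℝ} (hu : ε ≤ u) : quadRegPow α ε u = u ^ α := by
  rw [quadRegPow, if_neg fun h => hu.not_gt h.2, max_eq_left (hε.trans hu)]

theorem quadRegPow_of_mem_Icc (hα : α ≠ 0) (hε : 0 < ε) {u : ℝ} (hu : u ∈ Icc 0 ε) :
    quadRegPow α ε u = (α - 1) * ε ^ (α - 2) * u ^ 2 + (2 - α) * ε ^ (α - 1) * u := by
  rcases hu.1.eq_or_lt with rfl | hu₀
  · rw [quadRegPow_of_nonpos hα le_rfl]; ring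
  rcases hu.2.eq_or_lt.imp_left Eq.symm with rfl | huε
  · have h₁ : ε ^ (α - 1) * ε = ε ^ α := by
      rw [← Real.rpow_add_one hε.ne']; ring_nf
    have h₂ : ε ^ (α - 2) * ε ^ 2 = ε ^ α := by
      rw [← Real.rpow_natCast, ← Real.rpow_add hε]; norm_num
    rw [quadRegPow_of_le hε.le le_rfl]
    linear_combination (1 - α) * h₂ + (α - 2) * h₁
  · exact if_pos ⟨hu₀, huε⟩

theorem lipschitzWith_quadRegPow (hα₀ : 0 < α) (hα₁ : α ≤ 1) (hε : 0 < ε) :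
    LipschitzWith ((2 - α) * ε ^ (α - 1)).toNNReal (quadRegPow α ε) := by
  have hL : α * ε ^ (α - 1) ≤ (2 - α) * ε ^ (α - 1) := by
    have := Real.rpow_pos_of_pos hε (α - 1)
    nlinarith
  have hleft : LipschitzOnWith ((2 - α) * ε ^ (α - 1)).toNNReal (quadRegPow α ε) (Iic 0) :=
    (LipschitzWith.const' 0).lipschitzOnWith.congr
      fun u hu => (quadRegPow_of_nonpos hα₀.ne' hu).symm
  have hmid := (lipschitzOnWith_quadratic_Icc hα₁ hε).congr
    fun u hu => (quadRegPow_of_mem_Icc hα₀.ne' hε hu).symm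
  have hright := ((lipschitzOnWith_rpow_Ici hα₀.le hα₁ hε).weaken
    (Real.toNNReal_le_toNNReal hL)).congr fun u hu => (quadRegPow_of_le hε.le hu).symm
  rw [← lipschitzOnWith_univ, ← Iic_union_Ici (a := (0 : ℝ)), ← Icc_union_Ici_eq_Ici hε.le]
  exact hleft.union_of_subset_Iic_of_subset_Ici
    (hmid.union_of_subset_Iic_of_subset_Ici hright (right_mem_Icc.2 hε.le) self_mem_Ici
      Icc_subset_Iic_self subset_rfl)
    self_mem_Iic (Or.inl (left_mem_Icc.2 hε.le)) subset_rfl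
    (union_subset Icc_subset_Ici_self (Ici_subset_Ici.2 hε.le))

end quadRegPow

theorem stmt_15 (α ε : ℝ) (hα : α ∈ Set.Ioo (0:ℝ) 1) (hε : 0 < ε)
    (b bε : ℝ → ℝ)
    (hb : ∀ u : ℝ, b u = (max u 0) ^ α)
    (hbε : ∀ u : ℝ, bε u =
      if u ∈ Set.Ioo 0 ε then (α - 1) * ε ^ (α - 2) * u ^ 2 + (2 - α) * ε ^ (α - 1) * u
      else b u) :
    ∀ x y : ℝ, |bε x - bε y| ≤ (2 - α) * ε ^ (α - 1) * |x - y| := by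
  have hbε_eq : bε = quadRegPow α ε := funext fun u => by rw [hbε, hb, quadRegPow]
  have hL : 0 ≤ (2 - α) * ε ^ (α - 1) := mul_nonneg (by linarith [hα.2]) (by positivity)
  intro x y
  rw [← Real.dist_eq, ← Real.dist_eq, hbε_eq, ← Real.coe_toNNReal _ hL]
  exact (lipschitzWith_quadRegPow hα.1 hα.2.le hε).dist_le_mul x y
end

section
/- Let α ∈ (0,1) and ε > 0, and define b(u) = (max{u,0})^α and the quadratic regularization b_ε : ℝ → ℝ by b_ε(u) = (α−1)·ε^{α−2}·u² + (2−α)·ε^{α−1}·u for u ∈ (0,ε) and b_ε(u) = b(u) otherwise. Then b_ε(x) ≤ b(x) for all x ∈ ℝ. -/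
/-!
On `(0, ε)` the regularization is `ε ^ α` times the quadratic `(α - 1) t² + (2 - α) t` in `t = u / ε`,
so it suffices to bound that quadratic by `t ^ α`. Bernoulli's inequality for the exponent `1 - α`
gives `t ^ (1 - α) ≤ 1 - y` with `y = (1 - α)(1 - t)`, hence
`t ^ α = t / t ^ (1 - α) ≥ t / (1 - y) ≥ t (1 + y)`, which is the quadratic.
-/

open Real

lemma quadratic_le_rpow {α t : ℝ} (hα0 : 0 ≤ α) (hα1 : α ≤ 1) (ht : 0 < t) :
    (α - 1) * t ^ 2 + (2 - α) * t ≤ t ^ α := by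
  set y := (1 - α) * (1 - t)
  have hbernoulli : t ^ (1 - α) ≤ 1 - y := by
    have h := rpow_one_add_le_one_add_mul_self (s := t - 1) (p := 1 - α)
      (by linarith) (by linarith) (by linarith)
    rw [add_sub_cancel] at h
    linarith
  have hpos : 0 < t ^ (1 - α) := rpow_pos_of_pos ht _
  have hsplit : t ^ α = t / t ^ (1 - α) := by
    rw [rpow_sub ht, rpow_one, div_div_eq_mul_div, mul_div_cancel_left₀ _ ht.ne']
  calc (α - 1) * t ^ 2 + (2 - α) * t = t * (1 + y) := by ring
    _ ≤ t / (1 - y) := by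
        rw [le_div_iff₀ (hpos.trans_le hbernoulli)]
        nlinarith [mul_nonneg ht.le (sq_nonneg y)]
    _ ≤ t / t ^ (1 - α) := div_le_div_of_nonneg_left ht.le hpos hbernoulli
    _ = t ^ α := hsplit.symm

lemma regularization_le_rpow {α ε x : ℝ} (hα0 : 0 ≤ α) (hα1 : α ≤ 1) (hε : 0 < ε) (hx : 0 < x) :
    (α - 1) * ε ^ (α - 2) * x ^ 2 + (2 - α) * ε ^ (α - 1) * x ≤ x ^ α := by
  have ht : 0 < x / ε := div_pos hx hε
  have hscale : x ^ α = ε ^ α * (x / ε) ^ α := by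
    rw [← mul_rpow hε.le ht.le, mul_div_cancel₀ _ hε.ne']
  have hε2 : ε ^ (α - 2) = ε ^ α / ε ^ 2 := by
    rw [rpow_sub hε, rpow_two]
  have hε1 : ε ^ (α - 1) = ε ^ α / ε := by
    rw [rpow_sub hε, rpow_one]
  calc (α - 1) * ε ^ (α - 2) * x ^ 2 + (2 - α) * ε ^ (α - 1) * x
      = ε ^ α * ((α - 1) * (x / ε) ^ 2 + (2 - α) * (x / ε)) := by
        rw [hε2, hε1]
        field_simp
    _ ≤ ε ^ α * (x / ε) ^ α :=
        mul_le_mul_of_nonneg_left (quadratic_le_rpow hα0 hα1 ht) (rpow_nonneg hε.le α)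
    _ = x ^ α := hscale.symm

theorem stmt_16 (α ε : ℝ) (hα : α ∈ Set.Ioo (0:ℝ) 1) (hε : 0 < ε)
    (b bε : ℝ → ℝ)
    (hb : ∀ u : ℝ, b u = (max u 0) ^ α)
    (hbε : ∀ u : ℝ, bε u =
      if u ∈ Set.Ioo 0 ε then (α - 1) * ε ^ (α - 2) * u ^ 2 + (2 - α) * ε ^ (α - 1) * u
      else b u) :
    ∀ x : ℝ, bε x ≤ b x := by
  intro x
  rw [hbε x]
  split_ifs with hx
  · rw [hb x, max_eq_left hx.1.le]
    exact regularization_le_rpow hα.1.le hα.2.le hε hx.1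
  · exact le_rfl
end
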